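/- arXiv:1104.1699 — 3 statements merged into one kernel-verified Lean document; each statement's English description precedes it below -/
import Mathlib

section
/- Let f : ℝ → ℝ be continuous. Define, for x ∈ ℝ, the upper and lower Dini-type derivates via the set G_x of all limit points z ∈ ℝ ∪ {±∞} of difference quotients (f(x+t) − f(x))/t as t → 0, t ≠ 0, and set g_l(x) = inf G_x, g_r(x) = sup G_x. If J ⊆ ℝ is an open interval and c ∈ ℝ satisfies g_l(x) < c < g_r(x) for all x ∈ J, then the function h(x) = f(x) − c·x is neither constant, nor strictly monotone, on any open subinterval of J. -/
private lemma cluster_ge (c : ℝ) (q : ℝ → ℝ) (z : EReal) (l : Filter ℝ)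
    (hz : MapClusterPt z l (fun t => ((q t : ℝ) : EReal)))
    (hq : ∀ᶠ t in l, c ≤ q t) : (c : EReal) ≤ z := by
  have hmem : Set.Ici (c : EReal) ∈ Filter.map (fun t => ((q t : ℝ) : EReal)) l :=
    Filter.mem_map.2 (hq.mono (fun t ht => by simpa using EReal.coe_le_coe_iff.2 ht))
  have : z ∈ closure (Set.Ici (c : EReal)) :=
    mem_closure_iff_clusterPt.2 (hz.clusterPt.mono (Filter.le_principal_iff.2 hmem))
  rwa [IsClosed.closure_eq isClosed_Ici] at this

private lemma cluster_le (c : ℝ) (q : ℝ → ℝ) (z : EReal) (l : Filter ℝ)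
    (hz : MapClusterPt z l (fun t => ((q t : ℝ) : EReal)))
    (hq : ∀ᶠ t in l, q t ≤ c) : z ≤ (c : EReal) := by
  have hmem : Set.Iic (c : EReal) ∈ Filter.map (fun t => ((q t : ℝ) : EReal)) l :=
    Filter.mem_map.2 (hq.mono (fun t ht => by simpa using EReal.coe_le_coe_iff.2 ht))
  have : z ∈ closure (Set.Iic (c : EReal)) :=
    mem_closure_iff_clusterPt.2 (hz.clusterPt.mono (Filter.le_principal_iff.2 hmem))
  rwa [IsClosed.closure_eq isClosed_Iic] at this

theorem stmt_7 (f : ℝ → ℝ) (hf : Continuous f)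
    (G : ℝ → Set EReal)
    (hG : ∀ x, G x = {z : EReal |
      MapClusterPt z (nhdsWithin 0 {t : ℝ | t ≠ 0})
        (fun t : ℝ => ((f (x + t) - f x) / t : ℝ))})
    (gl gr : ℝ → EReal) (hgl : ∀ x, gl x = sInf (G x)) (hgr : ∀ x, gr x = sSup (G x))
    (a b : ℝ) (hab : a < b) (c : ℝ)
    (hc : ∀ x ∈ Set.Ioo a b, gl x < (c : EReal) ∧ (c : EReal) < gr x)
    (h : ℝ → ℝ) (hh : ∀ x, h x = f x - c * x) :
    ∀ a' b', a' < b' → Set.Ioo a' b' ⊆ Set.Ioo a b →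
      (¬ ∃ k : ℝ, ∀ x ∈ Set.Ioo a' b', h x = k) ∧
      ¬ StrictMonoOn h (Set.Ioo a' b') ∧ ¬ StrictAntiOn h (Set.Ioo a' b') := by
  intro a' b' hab' hsub
  set x : ℝ := (a' + b') / 2 with hxdef
  have hx : x ∈ Set.Ioo a' b' := ⟨by simp [hxdef]; linarith, by simp [hxdef]; linarith⟩
  have hxab := hsub hx
  obtain ⟨hgl_lt, hgr_gt⟩ := hc x hxab
  -- eventually x + t ∈ Ioo a' b' (in the punctured nhds filter)
  have hev : ∀ᶠ t in nhdsWithin 0 {t : ℝ | t ≠ 0},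
      x + t ∈ Set.Ioo a' b' ∧ t ≠ 0 := by
    have h1 : ∀ᶠ t in nhds (0 : ℝ), x + t ∈ Set.Ioo a' b' := by
      have : ContinuousAt (fun t : ℝ => x + t) 0 := by fun_prop
      have := this.eventually_mem (isOpen_Ioo.mem_nhds (by simpa using hx))
      simpa using this
    exact (h1.filter_mono nhdsWithin_le_nhds).and self_mem_nhdsWithin
  -- notation for the quotient
  set q : ℝ → ℝ := fun t => (f (x + t) - f x) / t with hq
  have hGx : G x = {z : EReal | MapClusterPt z (nhdsWithin 0 {t : ℝ | t ≠ 0})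
      (fun t : ℝ => ((q t : ℝ) : EReal))} := hG x
  -- quotient rewritten via h
  have hquot : ∀ t : ℝ, t ≠ 0 → q t = (h (x + t) - h x) / t + c := by
    intro t ht
    have : f (x + t) - f x = (h (x + t) - h x) + c * t := by
      rw [hh, hh]; ring
    rw [hq]; field_simp [this]; linarith
  refine ⟨?_, ?_, ?_⟩
  · rintro ⟨k, hk⟩
    have hevc : ∀ᶠ t in nhdsWithin 0 {t : ℝ | t ≠ 0}, q t = c := by
      refine hev.mono fun t ⟨hmem, ht⟩ => ?_
      rw [hquot t ht, hk _ hmem]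
      rw [hk _ hx]
      simp
    have hge : ∀ z ∈ G x, (c : EReal) ≤ z := by
      intro z hz
      rw [hGx] at hz
      exact cluster_ge c q z _ hz (hevc.mono fun t ht => ht.ge)
    have : (c : EReal) ≤ gl x := by rw [hgl]; exact le_sInf hge
    exact absurd hgl_lt (not_lt.2 this)
  · intro hmono
    have hge : ∀ z ∈ G x, (c : EReal) ≤ z := by
      intro z hz
      rw [hGx] at hz
      refine cluster_ge c q z _ hz (hev.mono fun t ⟨hmem, ht⟩ => ?_)
      rw [hquot t ht]
      have : 0 ≤ (h (x + t) - h x) / t := by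
        rcases ht.lt_or_gt with htneg | htpos
        · have : h (x + t) < h x := hmono hmem hx (by linarith)
          exact div_nonneg_of_nonpos (by linarith) htneg.le
        · have : h x < h (x + t) := hmono hx hmem (by linarith)
          exact div_nonneg (by linarith) htpos.le
      linarith
    have : (c : EReal) ≤ gl x := by rw [hgl]; exact le_sInf hge
    exact absurd hgl_lt (not_lt.2 this)
  · intro hanti
    have hle : ∀ z ∈ G x, z ≤ (c : EReal) := by
      intro z hz
      rw [hGx] at hz
      refine cluster_le c q z _ hz (hev.mono fun t ⟨hmem, ht⟩ => ?_)
      rw [hquot t ht]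
      have : (h (x + t) - h x) / t ≤ 0 := by
        rcases ht.lt_or_gt with htneg | htpos
        · have : h x < h (x + t) := hanti hmem hx (by linarith)
          exact div_nonpos_of_nonneg_of_nonpos (by linarith) htneg.le
        · have : h (x + t) < h x := hanti hx hmem (by linarith)
          exact div_nonpos_iff.2 (Or.inr ⟨by linarith, htpos.le⟩)
      linarith
    have : gr x ≤ (c : EReal) := by rw [hgr]; exact sSup_le hle
    exact absurd hgr_gt (not_lt.2 this)
end

section
/- Let A ⊆ ℝⁿ⁺¹ be a compact set, let B = π(A) be its projection onto the first n coordinates, and define f : B → ℝ by f(x) = min(A_x), where A_x = {y ∈ ℝ : (x,y) ∈ A}. Then the set of points of B at which f is discontinuous is meager in ℝⁿ (contained in a countable union of closed nowhere dense sets). -/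
open Set Filter Topology

theorem stmt_14 (n : ℕ) (A : Set ((Fin n → ℝ) × ℝ)) (hA : IsCompact A)
    (B : Set (Fin n → ℝ)) (hB : B = Prod.fst '' A)
    (f : (Fin n → ℝ) → ℝ) (hf : ∀ x ∈ B, f x = sInf {y : ℝ | (x, y) ∈ A}) :
    IsMeagre {x : Fin n → ℝ | x ∈ B ∧ ¬ ContinuousWithinAt f B x} := by
  have hBc : IsClosed B := by rw [hB]; exact (hA.image continuous_fst).isClosed
  have hbdd : ∀ x : Fin n → ℝ, BddBelow {y : ℝ | (x, y) ∈ A} := by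
    intro x
    apply ((hA.image continuous_snd).bddBelow).mono
    intro y hy
    exact ⟨(x, y), hy, rfl⟩
  have hmem : ∀ x ∈ B, (x, f x) ∈ A := by
    intro x hx
    have hne : {y : ℝ | (x, y) ∈ A}.Nonempty := by
      rw [hB] at hx; obtain ⟨p, hp, rfl⟩ := hx; exact ⟨p.2, hp⟩
    have hcl : IsClosed {y : ℝ | (x, y) ∈ A} :=
      hA.isClosed.preimage (Continuous.prodMk_right x)
    have := hcl.csInf_mem hne (hbdd x)
    rw [hf x hx]; exact this
  have hle : ∀ x ∈ B, ∀ y : ℝ, (x, y) ∈ A → f x ≤ y := by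
    intro x hx y hy
    rw [hf x hx]; exact csInf_le (hbdd x) hy
  -- lower semicontinuity within B
  have hlsc : ∀ x ∈ B, ∀ c : ℝ, c < f x → ∀ᶠ z in 𝓝[B] x, c < f z := by
    intro x hx c hc
    set K := A ∩ {p : (Fin n → ℝ) × ℝ | p.2 ≤ c} with hK
    have hKc : IsCompact K := hA.inter_right (isClosed_le continuous_snd continuous_const)
    have hKx : x ∉ Prod.fst '' K := by
      rintro ⟨p, ⟨hpA, hple⟩, rfl⟩
      have := hle _ hx p.2 (by simpa using hpA)
      simp only [mem_setOf_eq] at hple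
      linarith
    have hnb : (Prod.fst '' K)ᶜ ∈ 𝓝 x :=
      ((hKc.image continuous_fst).isClosed).isOpen_compl.mem_nhds hKx
    filter_upwards [nhdsWithin_le_nhds hnb, self_mem_nhdsWithin] with z hz hzB
    by_contra h
    push_neg at h
    exact hz ⟨(z, f z), ⟨hmem z hzB, h⟩, rfl⟩
  -- sublevel sets are closed
  have hsub : ∀ c : ℝ, IsClosed {y ∈ B | f y ≤ c} := by
    intro c
    rw [← isOpen_compl_iff]
    rw [isOpen_iff_mem_nhds]
    intro x hx
    simp only [mem_compl_iff, mem_setOf_eq, not_and, not_le] at hx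
    by_cases hxB : x ∈ B
    · have := hlsc x hxB c (hx hxB)
      rw [eventually_nhdsWithin_iff] at this
      filter_upwards [this] with z hz
      simp only [mem_compl_iff, mem_setOf_eq, not_and, not_le]
      exact fun hzB => hz hzB
    · filter_upwards [hBc.isOpen_compl.mem_nhds hxB] with z hz
      simp only [mem_compl_iff, mem_setOf_eq, not_and]
      exact fun h => absurd h hz
  -- the covering family
  set T : ℚ × ℚ → Set (Fin n → ℝ) := fun p =>
    if p.1 < p.2 then closure {y ∈ B | (p.2 : ℝ) ≤ f y} ∩ {y ∈ B | f y ≤ (p.1 : ℝ)} else ∅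
    with hT
  have hTnd : ∀ p : ℚ × ℚ, IsNowhereDense (T p) := by
    intro ⟨q, q'⟩
    by_cases hqq : q < q'
    · simp only [hT, if_pos hqq]
      have hcl : IsClosed (closure {y ∈ B | (q' : ℝ) ≤ f y} ∩ {y ∈ B | f y ≤ (q : ℝ)}) :=
        isClosed_closure.inter (hsub q)
      rw [hcl.isNowhereDense_iff, eq_empty_iff_forall_notMem]
      intro x hx
      have hxi := mem_of_mem_of_subset hx interior_subset
      have hU : interior (closure {y ∈ B | (q' : ℝ) ≤ f y} ∩ {y ∈ B | f y ≤ (q : ℝ)}) ∈ 𝓝 x :=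
        isOpen_interior.mem_nhds hx
      have hxcl : x ∈ closure {y ∈ B | (q' : ℝ) ≤ f y} := hxi.1
      rw [mem_closure_iff_nhds] at hxcl
      obtain ⟨z, hz1, hz2⟩ := hxcl _ hU
      have hz1' := mem_of_mem_of_subset hz1 interior_subset
      have h1 : (q' : ℝ) ≤ f z := hz2.2
      have h2 : f z ≤ (q : ℝ) := hz1'.2.2
      have : (q : ℝ) < (q' : ℝ) := by exact_mod_cast hqq
      linarith
    · simp only [hT, if_neg hqq, isNowhereDense_empty]
  -- covering
  have hcover : {x : Fin n → ℝ | x ∈ B ∧ ¬ ContinuousWithinAt f B x} ⊆ ⋃ p : ℚ × ℚ, T p := by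
    rintro x ⟨hxB, hxd⟩
    -- find q' with f x < q' and x ∈ closure of superlevel set
    by_cases H : ∃ q' : ℚ, f x < (q' : ℝ) ∧ x ∈ closure {y ∈ B | (q' : ℝ) ≤ f y}
    · obtain ⟨q', hq'1, hq'2⟩ := H
      obtain ⟨q, hq1, hq2⟩ := exists_rat_btwn hq'1
      refine mem_iUnion.2 ⟨(q, q'), ?_⟩
      have hqq : q < q' := by exact_mod_cast hq2
      simp only [hT, if_pos hqq]
      exact ⟨hq'2, hxB, le_of_lt hq1⟩
    · push_neg at H
      exfalso
      apply hxd
      rw [ContinuousWithinAt]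
      apply tendsto_order.2
      constructor
      · intro a ha
        exact hlsc x hxB a ha
      · intro b hb
        obtain ⟨q', hq'1, hq'2⟩ := exists_rat_btwn hb
        have hx' : x ∉ closure {y ∈ B | (q' : ℝ) ≤ f y} := H q' hq'1
        have : (closure {y ∈ B | (q' : ℝ) ≤ f y})ᶜ ∈ 𝓝 x :=
          isClosed_closure.isOpen_compl.mem_nhds hx'
        filter_upwards [nhdsWithin_le_nhds this, self_mem_nhdsWithin] with z hz hzB
        have : ¬ ((q' : ℝ) ≤ f z) := fun h => hz (subset_closure ⟨hzB, h⟩)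
        push_neg at this
        linarith
  -- conclude
  rw [isMeagre_iff_countable_union_isNowhereDense]
  refine ⟨range T, ?_, countable_range T, ?_⟩
  · rintro t ⟨p, rfl⟩; exact hTnd p
  · rw [sUnion_range]; exact hcover
end

section
/- Let A ⊆ ℝⁿ⁺¹ be compact, B = π(A) its projection to ℝⁿ, and f(x) = min(A_x) the minimum selection. Then f is lower semicontinuous at every point of B; moreover the graph of f is a Gδ subset of ℝⁿ⁺¹. -/
open Filter Topology Set

lemma aux_closed {X : Type*} [MetricSpace X] (A : Set (X × ℝ)) (hA : IsCompact A) (ε : ℝ) :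
    IsClosed {p : X × ℝ | ∃ y', (p.1, y') ∈ A ∧ y' + ε ≤ p.2} := by
  apply IsSeqClosed.isClosed
  intro u p hu hup
  choose y hy1 hy2 using hu
  obtain ⟨a, haA, φ, hφ, hconv⟩ := hA.tendsto_subseq (x := fun j => ((u j).1, y j)) (fun j => hy1 j)
  have h1 := (continuous_fst.tendsto a).comp hconv
  have h1' : Tendsto (fun j => (u (φ j)).1) atTop (𝓝 p.1) :=
    ((continuous_fst.tendsto p).comp hup).comp hφ.tendsto_atTop
  have ha1 : a.1 = p.1 := tendsto_nhds_unique h1 h1'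
  have h2 := (((continuous_snd.tendsto a).comp hconv)).add (tendsto_const_nhds (x := ε))
  have h2' : Tendsto (fun j => (u (φ j)).2) atTop (𝓝 p.2) :=
    ((continuous_snd.tendsto p).comp hup).comp hφ.tendsto_atTop
  have hle : a.2 + ε ≤ p.2 :=
    le_of_tendsto_of_tendsto' h2 h2' fun j => hy2 (φ j)
  refine ⟨a.2, ?_, hle⟩
  rwa [← ha1, Prod.mk.eta]

theorem stmt_15 (n : ℕ) (A : Set ((Fin n → ℝ) × ℝ)) (hA : IsCompact A)
    (B : Set (Fin n → ℝ)) (hB : B = Prod.fst '' A)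
    (f : (Fin n → ℝ) → ℝ) (hf : ∀ x ∈ B, f x = sInf {y : ℝ | (x, y) ∈ A}) :
    LowerSemicontinuousOn f B ∧ IsGδ {p : (Fin n → ℝ) × ℝ | p.1 ∈ B ∧ p.2 = f p.1} := by
  set S : (Fin n → ℝ) → Set ℝ := fun x => {y : ℝ | (x, y) ∈ A} with hS
  have hSclosed : ∀ x, IsClosed (S x) := fun x =>
    hA.isClosed.preimage (Continuous.prodMk_right x)
  have hSbdd : ∀ x, BddBelow (S x) := by
    intro x
    refine ((hA.image continuous_snd).bddBelow).mono ?_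
    intro y hy; exact ⟨(x, y), hy, rfl⟩
  have hSne : ∀ x ∈ B, (S x).Nonempty := by
    intro x hx
    rw [hB] at hx
    obtain ⟨p, hp, rfl⟩ := hx
    exact ⟨p.2, hp⟩
  have hmem : ∀ x ∈ B, (x, f x) ∈ A := by
    intro x hx
    rw [hf x hx]
    exact (hSclosed x).csInf_mem (hSne x hx) (hSbdd x)
  have hlb : ∀ x ∈ B, ∀ y ∈ S x, f x ≤ y := by
    intro x hx y hy
    rw [hf x hx]
    exact csInf_le (hSbdd x) hy
  constructor
  · -- lower semicontinuity
    intro x hx t ht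
    by_contra hcon
    have hfreq : ∃ᶠ x' in 𝓝[B] x, f x' ≤ t := by
      simpa [not_eventually, not_lt] using hcon
    rw [frequently_iff_neBot] at hfreq
    set F : Filter (Fin n → ℝ) := 𝓝[B] x ⊓ 𝓟 {x' | f x' ≤ t} with hF
    have : NeBot F := hfreq
    set G : Filter ((Fin n → ℝ) × ℝ) := Filter.map (fun x' => (x', f x')) F with hG
    have hGA : G ≤ 𝓟 A := by
      rw [le_principal_iff, hG, mem_map]
      have hBmem : ∀ᶠ x' in F, x' ∈ B :=
        Filter.le_def.mp inf_le_left _ self_mem_nhdsWithin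
      filter_upwards [hBmem] with x' hx' using hmem x' hx'
    obtain ⟨a, haA, hcl⟩ := hA hGA
    have ha1 : a.1 = x := by
      have hmapfst : Filter.map Prod.fst G = F := by
        rw [hG, Filter.map_map]; rfl
      have hc1 : ClusterPt a.1 F := by
        have := hcl.map (continuous_fst.continuousAt (x := a)) (tendsto_map (f := Prod.fst))
        rwa [hmapfst] at this
      have hc2 : ClusterPt a.1 (𝓝 x) :=
        hc1.mono (inf_le_left.trans nhdsWithin_le_nhds)
      exact eq_of_nhds_neBot hc2
    have ha2 : a.2 ≤ t := by
      have hmapsnd : Filter.map Prod.snd G ≤ 𝓟 (Iic t) := by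
        rw [hG, Filter.map_map, le_principal_iff, mem_map]
        have : ∀ᶠ x' in F, f x' ≤ t := Filter.le_def.mp inf_le_right _ (mem_principal_self _)
        filter_upwards [this] with x' hx' using hx'
      have hc : ClusterPt a.2 (𝓟 (Iic t)) :=
        (hcl.map (continuous_snd.continuousAt (x := a)) (tendsto_map (f := Prod.snd))).mono hmapsnd
      have := mem_closure_iff_clusterPt.mpr hc
      rwa [isClosed_Iic.closure_eq] at this
    have haS : a.2 ∈ S x := by
      have : (x, a.2) ∈ A := by rwa [← ha1, Prod.mk.eta]
      exact this
    exact absurd (hlb x hx a.2 haS) (by linarith)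
  · -- Gδ graph
    have hEq : {p : (Fin n → ℝ) × ℝ | p.1 ∈ B ∧ p.2 = f p.1} =
        A ∩ ⋂ k : ℕ, {p : (Fin n → ℝ) × ℝ | ∃ y', (p.1, y') ∈ A ∧ y' + 1 / (k + 1) ≤ p.2}ᶜ := by
      ext p
      simp only [mem_setOf_eq, mem_inter_iff, mem_iInter, mem_compl_iff, not_exists, not_and,
        not_le]
      constructor
      · rintro ⟨hpB, hpf⟩
        have hpA : p ∈ A := by
          have := hmem p.1 hpB
          rw [← hpf, Prod.mk.eta] at this
          exact this
        refine ⟨hpA, fun k y' hy' => ?_⟩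
        have h1 : f p.1 ≤ y' := hlb p.1 hpB y' hy'
        have h2 : (0 : ℝ) < 1 / (k + 1) := by positivity
        rw [hpf]; linarith
      · rintro ⟨hpA, hk⟩
        have hpB : p.1 ∈ B := by rw [hB]; exact ⟨p, hpA, rfl⟩
        refine ⟨hpB, le_antisymm ?_ ?_⟩
        · -- p.2 ≤ f p.1 : p.2 is a lower bound of S p.1
          rw [hf p.1 hpB]
          refine le_csInf (hSne p.1 hpB) fun y hy => ?_
          by_contra hlt
          push_neg at hlt
          obtain ⟨k, hk'⟩ := exists_nat_one_div_lt (show (0:ℝ) < p.2 - y by linarith)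
          exact absurd (hk k y hy) (by push_neg; linarith)
        · exact hlb p.1 hpB p.2 hpA
    rw [hEq]
    exact hA.isClosed.isGδ.inter (IsGδ.iInter fun k =>
      ((aux_closed A hA (1 / (k + 1))).isOpen_compl).isGδ)
end
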